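/- The maps (z,k) ↦ (φ(z),k) descend to well-defined continuous maps π₁ : X₁ → Y and π₂ : X₂ → Y, and π₂ ∘ f ≠ π₁, where f : X₁ → X₂ is the homeomorphism induced by (z,0) ↦ (z,0), (z,1) ↦ (−z,1); for instance π₂(f([(1+i,1)])) ≠ π₁([(1+i,1)]). -/

import Mathlib

open OnePoint

def negSphere : OnePoint ℂ → OnePoint ℂ := OnePoint.map (fun z : ℂ => -z)

def relEx1₁ : OnePoint ℂ × Fin 2 → OnePoint ℂ × Fin 2 → Prop := fun a b =>
  (a = (((0 : ℂ) : OnePoint ℂ), 0) ∧ b = (((0 : ℂ) : OnePoint ℂ), 1)) ∨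
  (a = ((Complex.I : OnePoint ℂ), 0) ∧ b = ((Complex.I : OnePoint ℂ), 1)) ∨
  (a = (((-Complex.I : ℂ) : OnePoint ℂ), 0) ∧ b = (((-Complex.I : ℂ) : OnePoint ℂ), 1))

def relEx1₂ : OnePoint ℂ × Fin 2 → OnePoint ℂ × Fin 2 → Prop := fun a b =>
  (a = (((0 : ℂ) : OnePoint ℂ), 0) ∧ b = (((0 : ℂ) : OnePoint ℂ), 1)) ∨
  (a = ((Complex.I : OnePoint ℂ), 0) ∧ b = (((-Complex.I : ℂ) : OnePoint ℂ), 1)) ∨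
  (a = (((-Complex.I : ℂ) : OnePoint ℂ), 0) ∧ b = ((Complex.I : OnePoint ℂ), 1))

def flipSecondSphere : OnePoint ℂ × Fin 2 → OnePoint ℂ × Fin 2 :=
  fun a => (if a.2 = 1 then negSphere a.1 else a.1, a.2)

abbrev UpperHalfPlaneClosed : Type := {z : ℂ // 0 ≤ z.im}

noncomputable def foldSphere : OnePoint ℂ → OnePoint UpperHalfPlaneClosed :=
  OnePoint.map (fun z : ℂ =>
    (⟨(z.re : ℂ) + |z.im| * Complex.I, by
        simp [Complex.add_im, Complex.mul_im, abs_nonneg]⟩ : UpperHalfPlaneClosed))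

def Hzero : UpperHalfPlaneClosed := ⟨0, by simp⟩

def Hi : UpperHalfPlaneClosed := ⟨Complex.I, by simp⟩

def relY : OnePoint UpperHalfPlaneClosed × Fin 2 → OnePoint UpperHalfPlaneClosed × Fin 2 → Prop :=
  fun a b =>
    (a = ((Hzero : OnePoint UpperHalfPlaneClosed), 0) ∧
       b = ((Hzero : OnePoint UpperHalfPlaneClosed), 1)) ∨
    (a = ((Hi : OnePoint UpperHalfPlaneClosed), 0) ∧
       b = ((Hi : OnePoint UpperHalfPlaneClosed), 1))

-- aux
noncomputable def foldC : ℂ → UpperHalfPlaneClosed := fun z =>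
  ⟨(z.re : ℂ) + |z.im| * Complex.I, by
    simp [Complex.add_im, Complex.mul_im, abs_nonneg]⟩

lemma foldC_norm (z : ℂ) : ‖(foldC z).1‖ = ‖z‖ := by
  have h1 : (foldC z).1.re = z.re := by simp [foldC]
  have h2 : (foldC z).1.im = |z.im| := by simp [foldC]
  rw [Complex.norm_def, Complex.norm_def,
    Complex.normSq_apply, Complex.normSq_apply, h1, h2, abs_mul_abs_self]

lemma continuous_foldC : Continuous foldC := by
  apply Continuous.subtype_mk
  fun_prop

lemma tendsto_foldC :
    Filter.Tendsto foldC (Filter.coclosedCompact ℂ) (Filter.coclosedCompact UpperHalfPlaneClosed) := by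
  rw [Filter.coclosedCompact_eq_cocompact, Filter.coclosedCompact_eq_cocompact,
    Filter.hasBasis_cocompact.tendsto_right_iff]
  intro K hK
  obtain ⟨R, hR⟩ : ∃ R, ∀ w ∈ K, ‖w.1‖ ≤ R := by
    obtain ⟨R, hR⟩ := (hK.image (by fun_prop : Continuous (fun w : UpperHalfPlaneClosed => w.1))).isBounded.subset_closedBall 0
    exact ⟨R, fun w hw => by simpa using hR ⟨w, hw, rfl⟩⟩
  rw [Filter.eventually_iff, Filter.mem_cocompact']
  refine ⟨Metric.closedBall 0 R, isCompact_closedBall 0 R, fun z hz => ?_⟩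
  simp only [Set.mem_compl_iff, Set.mem_setOf_eq, not_not] at hz
  simp only [Metric.mem_closedBall, dist_zero_right]
  calc ‖z‖ = ‖(foldC z).1‖ := (foldC_norm z).symm
    _ ≤ R := hR _ hz

lemma continuous_foldSphere : Continuous foldSphere :=
  OnePoint.continuous_map continuous_foldC tendsto_foldC

lemma foldSphere_coe (z : ℂ) : foldSphere (z : OnePoint ℂ) = (foldC z : OnePoint UpperHalfPlaneClosed) := rfl

lemma foldC_zero : foldC 0 = Hzero := by
  apply Subtype.ext; simp [foldC, Hzero]

lemma foldC_I : foldC Complex.I = Hi := by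
  apply Subtype.ext; simp [foldC, Hi]

lemma foldC_negI : foldC (-Complex.I) = Hi := by
  apply Subtype.ext; simp [foldC, Hi]

/-- the maps `(z,k) ↦ (φ(z),k)` descend to continuous maps
`π₁ : X₁ → Y`, `π₂ : X₂ → Y`, and for the homeomorphism `f : X₁ → X₂` induced by
`(z,0) ↦ (z,0)`, `(z,1) ↦ (−z,1)` one has `π₂ ∘ f ≠ π₁`; for instance
`π₂(f([(1+i,1)])) ≠ π₁([(1+i,1)])`. -/
theorem double_cover_statement_7 :
    ∃ (π₁ : Quot relEx1₁ → Quot relY) (π₂ : Quot relEx1₂ → Quot relY),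
      Continuous π₁ ∧ Continuous π₂ ∧
      (∀ a : OnePoint ℂ × Fin 2,
        π₁ (Quot.mk relEx1₁ a) = Quot.mk relY (foldSphere a.1, a.2)) ∧
      (∀ a : OnePoint ℂ × Fin 2,
        π₂ (Quot.mk relEx1₂ a) = Quot.mk relY (foldSphere a.1, a.2)) ∧
      ∀ f : Quot relEx1₁ → Quot relEx1₂,
        (∀ a : OnePoint ℂ × Fin 2,
          f (Quot.mk relEx1₁ a) = Quot.mk relEx1₂ (flipSecondSphere a)) →
        π₂ ∘ f ≠ π₁ ∧
        π₂ (f (Quot.mk relEx1₁ (((1 + Complex.I : ℂ) : OnePoint ℂ), 1))) ≠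
          π₁ (Quot.mk relEx1₁ (((1 + Complex.I : ℂ) : OnePoint ℂ), 1)) := by
  set F : OnePoint ℂ × Fin 2 → Quot relY :=
    fun a => Quot.mk relY (foldSphere a.1, a.2) with hF
  have hF1 : ∀ a b, relEx1₁ a b → F a = F b := by
    rintro a b (⟨rfl, rfl⟩ | ⟨rfl, rfl⟩ | ⟨rfl, rfl⟩) <;>
      · apply Quot.sound
        simp only [relY, foldSphere_coe, foldC_zero, foldC_I, foldC_negI]
        tauto
  have hF2 : ∀ a b, relEx1₂ a b → F a = F b := by
    rintro a b (⟨rfl, rfl⟩ | ⟨rfl, rfl⟩ | ⟨rfl, rfl⟩) <;>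
      · apply Quot.sound
        simp only [relY, foldSphere_coe, foldC_zero, foldC_I, foldC_negI]
        tauto
  have hFc : Continuous F := by
    apply Continuous.comp continuous_quot_mk
    exact (continuous_foldSphere.comp continuous_fst).prodMk continuous_snd
  refine ⟨Quot.lift F hF1, Quot.lift F hF2,
    continuous_quot_lift hF1 hFc, continuous_quot_lift hF2 hFc,
    fun a => rfl, fun a => rfl, fun f hf => ?_⟩
  have key : Quot.lift F hF2 (f (Quot.mk relEx1₁ (((1 + Complex.I : ℂ) : OnePoint ℂ), 1))) ≠
      Quot.lift F hF1 (Quot.mk relEx1₁ (((1 + Complex.I : ℂ) : OnePoint ℂ), 1)) := by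
    rw [hf]
    intro h
    have hg : ∀ a b, relY a b → a.1 = b.1 := by
      rintro a b (⟨rfl, rfl⟩ | ⟨rfl, rfl⟩) <;> rfl
    have := congrArg (Quot.lift (fun a : OnePoint UpperHalfPlaneClosed × Fin 2 => a.1) hg) h
    simp only [hF, flipSecondSphere, negSphere, OnePoint.map_some, if_true, foldSphere_coe] at this
    rw [OnePoint.coe_eq_coe, Subtype.ext_iff] at this
    have hre := congrArg Complex.re this
    simp [foldC] at hre
    norm_num at hre
  refine ⟨fun h => key ?_, key⟩
  exact congrFun h _
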